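/- arXiv:2012.14823 — 5 statements merged into one kernel-verified Lean document; each statement's English description precedes it below -/
import Mathlib

section
/- Suppose there is no π ∈ S with Zπ = w and Pen(π) = 0. Then for any δ > 0 the modulus problem ω(δ) = sup{2β : β‖w − Zπ‖₂ ≤ δ/2, β·Pen(π) ≤ C, β ≥ 0, π ∈ S} has a maximizer (β*, π*) with β* > 0 and ‖w − Zπ*‖₂ > 0. -/
open Matrix

noncomputable def l2norm {n : ℕ} (x : Fin n → ℝ) : ℝ := Real.sqrt (∑ i, x i ^ 2)

/-!
For `β ≥ 0` the two constraints say `β * g π ≤ 1`, where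
`g π = max (‖w - Zπ‖ / (δ/2)) (Pen π / C)`, so the modulus problem is solved by `β* = 1 / min g`.
The function `g` is invariant under the null space of the seminorm `‖Z·‖ + Pen` on `S` and has
bounded sublevel sets modulo it; on a complement of that null space the seminorm dominates a
multiple of the norm, so `g` attains its minimum there. The minimum is positive since no `π`
has `Zπ = w` and `Pen π = 0`, and a minimizer cannot fit `w` exactly, since shrinking it would
lower `g`.
-/

namespace Seminorm

variable {E : Type*} [NormedAddCommGroup E] [NormedSpace ℝ E]

def ker (p : Seminorm ℝ E) : Submodule ℝ E where
  carrier := {x | p x = 0}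
  add_mem' {x y} hx hy :=
    le_antisymm ((map_add_le_add p x y).trans_eq (by simp_all)) (apply_nonneg p _)
  zero_mem' := map_zero p
  smul_mem' c x hx := by simp_all [map_smul_eq_mul]

theorem mem_ker {p : Seminorm ℝ E} {x : E} : x ∈ p.ker ↔ p x = 0 := Iff.rfl

theorem map_add_of_mem_ker (p : Seminorm ℝ E) (x : E) {v : E} (hv : v ∈ p.ker) :
    p (x + v) = p x := by
  have := abs_sub_map_le_sub p (x + v) x
  rw [add_sub_cancel_left, mem_ker.1 hv, abs_nonpos_iff, sub_eq_zero] at this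
  exact this

variable [FiniteDimensional ℝ E]

theorem exists_pos_mul_norm_le_of_disjoint_ker (p : Seminorm ℝ E) (hp : Continuous p)
    {W : Submodule ℝ E} (hW : Disjoint W p.ker) : ∃ c > 0, ∀ u ∈ W, c * ‖u‖ ≤ p u := by
  have hK : IsCompact ((W : Set E) ∩ Metric.sphere 0 1) :=
    (isCompact_sphere 0 1).inter_left W.closed_of_finiteDimensional
  have hpos : ∀ u ∈ (W : Set E) ∩ Metric.sphere 0 1, 0 < p u := by
    rintro u ⟨huW, hu⟩
    refine (apply_nonneg p u).lt_of_ne' fun h => ?_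
    have : u = 0 := (Submodule.disjoint_def.1 hW) u huW h
    simp [this] at hu
  obtain ⟨c, hc, hcK⟩ := hK.exists_forall_le' hp.continuousOn hpos
  refine ⟨c, hc, fun u hu => ?_⟩
  rcases eq_or_ne u 0 with rfl | hu0
  · simp
  have hnorm : 0 < ‖u‖ := norm_pos_iff.2 hu0
  have := hcK (‖u‖⁻¹ • u) ⟨W.smul_mem _ hu, by
    rw [mem_sphere_zero_iff_norm, norm_smul, norm_inv, norm_norm, inv_mul_cancel₀ hnorm.ne']⟩
  rw [map_smul_eq_mul, norm_inv, norm_norm, le_inv_mul_iff₀ hnorm] at this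
  linarith

theorem exists_forall_le_of_ker_invariant (p : Seminorm ℝ E) (hp : Continuous p) {g : E → ℝ}
    (hg : Continuous g) (hinv : ∀ x, ∀ v ∈ p.ker, g (x + v) = g x)
    (hbdd : ∀ r, ∃ M, ∀ x, g x ≤ r → p x ≤ M) : ∃ x, ∀ y, g x ≤ g y := by
  obtain ⟨W, hW⟩ := Submodule.exists_isCompl p.ker
  obtain ⟨c, hc, hcW⟩ := p.exists_pos_mul_norm_le_of_disjoint_ker hp hW.disjoint.symm
  obtain ⟨M, hM⟩ := hbdd (g 0)
  set B := (W : Set E) ∩ {x | g x ≤ g 0}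
  have hB : IsCompact B := by
    refine (isCompact_closedBall (0 : E) (M / c)).of_isClosed_subset
      (W.closed_of_finiteDimensional.inter (isClosed_le hg continuous_const)) ?_
    rintro u ⟨huW, hu⟩
    rw [mem_closedBall_zero_iff, le_div_iff₀ hc, mul_comm]
    exact (hcW u huW).trans (hM u hu)
  obtain ⟨x₀, hx₀B, hx₀⟩ := hB.exists_isMinOn ⟨0, W.zero_mem, le_refl (g 0)⟩ hg.continuousOn
  refine ⟨x₀, fun y => ?_⟩
  obtain ⟨v, hv, u, hu, rfl⟩ := Submodule.mem_sup.1 (hW.sup_eq_top ▸ Submodule.mem_top (x := y))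
  rw [add_comm, hinv u v hv]
  by_cases h : g u ≤ g 0
  · exact hx₀ ⟨hu, h⟩
  · exact hx₀B.2.trans (le_of_not_ge h)

end Seminorm

section ModulusProblem

variable {E F : Type*} [NormedAddCommGroup E] [NormedSpace ℝ E] [NormedAddCommGroup F]
  [NormedSpace ℝ F]

noncomputable def modulusObjective (A : E →ₗ[ℝ] F) (P : Seminorm ℝ E) (w : F) (a b : ℝ) (x : E) :
    ℝ :=
  max (‖w - A x‖ / a) (P x / b)

theorem mul_max_div_le_one_iff {β u v a b : ℝ} (hβ : 0 ≤ β) (ha : 0 < a) (hb : 0 < b) :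
    β * max (u / a) (v / b) ≤ 1 ↔ β * u ≤ a ∧ β * v ≤ b := by
  rw [mul_max_of_nonneg _ _ hβ, max_le_iff, ← mul_div_assoc, ← mul_div_assoc, div_le_one ha,
    div_le_one hb]

variable (A : E →ₗ[ℝ] F) (P : Seminorm ℝ E) (w : F) {a b : ℝ}

theorem exists_forall_modulusObjective_le [FiniteDimensional ℝ E] (hP : Continuous P)
    (ha : 0 < a) (hb : 0 < b) :
    ∃ x, ∀ y, modulusObjective A P w a b x ≤ modulusObjective A P w a b y := by
  have hA : Continuous A := A.continuous_of_finiteDimensional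
  have hnorm_le : ∀ x, ‖A x‖ ≤ ‖w‖ + ‖w - A x‖ := fun x => by
    simpa using norm_sub_le w (w - A x)
  refine ((normSeminorm ℝ F).comp A + P).exists_forall_le_of_ker_invariant
    ((continuous_norm.comp hA).add hP)
    (((continuous_const.sub hA).norm.div_const a).max (hP.div_const b)) ?_ ?_
  · intro x v hv
    have hv' : ‖A v‖ + P v = 0 := hv
    have hAv : A v = 0 := norm_eq_zero.1 (by linarith [norm_nonneg (A v), apply_nonneg P v])
    have hPv : v ∈ P.ker := Seminorm.mem_ker.2 (by linarith [norm_nonneg (A v), apply_nonneg P v])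
    simp only [modulusObjective, map_add, hAv, add_zero, P.map_add_of_mem_ker x hPv]
  · intro r
    refine ⟨‖w‖ + a * r + b * r, fun x hx => ?_⟩
    rw [modulusObjective, max_le_iff, div_le_iff₀ ha, div_le_iff₀ hb] at hx
    simp only [FunLike.coe_add, Pi.add_apply, Seminorm.comp_apply, coe_normSeminorm]
    linarith [hnorm_le x]

variable {A P w}

theorem modulusObjective_pos (ha : 0 < a) (hb : 0 < b) (hno : ∀ x, A x = w → P x ≠ 0) (x : E) :
    0 < modulusObjective A P w a b x := by
  by_cases hx : A x = w
  · exact lt_max_of_lt_right (div_pos ((apply_nonneg P x).lt_of_ne' (hno x hx)) hb)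
  · exact lt_max_of_lt_left (div_pos (norm_pos_iff.2 (sub_ne_zero.2 (Ne.symm hx))) ha)

/-- If a minimizer `x` had `A x = w`, its value would be `β = P x / b > 0`, while `t • x` with
`t = α / (α + β) < 1`, `α = ‖w‖ / a`, has value `(1 - t) α = t β < β`. -/
theorem norm_sub_pos_of_forall_modulusObjective_le (ha : 0 < a) (hb : 0 < b)
    (hno : ∀ x, A x = w → P x ≠ 0) {x : E}
    (hx : ∀ y, modulusObjective A P w a b x ≤ modulusObjective A P w a b y) :
    0 < ‖w - A x‖ := by
  refine norm_pos_iff.2 (sub_ne_zero.2 fun hw => ?_)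
  set α := ‖w‖ / a
  set β := P x / b
  have hβ : 0 < β := div_pos ((apply_nonneg P x).lt_of_ne' (hno x hw.symm)) hb
  have hα : 0 ≤ α := by positivity
  set t := α / (α + β)
  have ht0 : 0 ≤ t := by positivity
  have ht1 : t < 1 := (div_lt_one (by positivity)).2 (by linarith)
  have hgx : modulusObjective A P w a b x = β := by
    simp [modulusObjective, ← hw, β, hβ.le]
  have hgtx : modulusObjective A P w a b (t • x) = t * β := by
    have hbal : (1 - t) * α = t * β := by
      simp only [t]; field_simp; ring
    have hres : w - A (t • x) = (1 - t) • w := by rw [map_smul, ← hw, sub_smul, one_smul]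
    rw [modulusObjective, hres, norm_smul, Real.norm_of_nonneg (by linarith), map_smul_eq_mul,
      Real.norm_of_nonneg ht0, mul_div_assoc, mul_div_assoc, hbal, max_self]
  have := hx (t • x)
  rw [hgx, hgtx] at this
  nlinarith

end ModulusProblem

theorem l2norm_eq_norm {n : ℕ} (x : Fin n → ℝ) : l2norm x = ‖WithLp.toLp 2 x‖ := by
  simp [l2norm, EuclideanSpace.norm_eq]

theorem modulus_problem_has_maximizer_general {n k : ℕ} (S : Submodule ℝ (Fin k → ℝ))
    (Pen : (Fin k → ℝ) → ℝ)
    (htri : ∀ x y, x ∈ S → y ∈ S → Pen (x + y) ≤ Pen x + Pen y)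
    (hhom : ∀ (c : ℝ) (x), x ∈ S → Pen (c • x) = |c| * Pen x)
    (hcont : Continuous Pen)
    (Z : Matrix (Fin n) (Fin k) ℝ) (w : Fin n → ℝ)
    (C : ℝ) (hC : 0 < C)
    (hno : ¬ ∃ π ∈ S, Z.mulVec π = w ∧ Pen π = 0)
    (δ : ℝ) (hδ : 0 < δ) :
    ∃ β : ℝ, ∃ π ∈ S, 0 < β ∧
      β * l2norm (w - Z.mulVec π) ≤ δ / 2 ∧ β * Pen π ≤ C ∧
      0 < l2norm (w - Z.mulVec π) ∧
      ∀ β' : ℝ, ∀ π' ∈ S, 0 ≤ β' →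
        β' * l2norm (w - Z.mulVec π') ≤ δ / 2 → β' * Pen π' ≤ C →
        2 * β' ≤ 2 * β := by
  let A : S →ₗ[ℝ] EuclideanSpace ℝ (Fin n) :=
    (WithLp.linearEquiv 2 ℝ (Fin n → ℝ)).symm.toLinearMap ∘ₗ Z.mulVecLin ∘ₗ S.subtype
  let P : Seminorm ℝ S :=
    .of (fun x => Pen x) (fun x y => htri x y x.2 y.2) (fun c x => by simpa using hhom c x x.2)
  have hδ2 : 0 < δ / 2 := half_pos hδ
  let g := modulusObjective A P (WithLp.toLp 2 w) (δ / 2) C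
  have hnorm (π : S) : l2norm (w - Z *ᵥ π) = ‖WithLp.toLp 2 w - A π‖ := by
    rw [l2norm_eq_norm]; rfl
  have hfeas {β : ℝ} (hβ : 0 ≤ β) (π : S) :
      β * g π ≤ 1 ↔ β * l2norm (w - Z *ᵥ π) ≤ δ / 2 ∧ β * Pen π ≤ C := by
    rw [hnorm]; exact mul_max_div_le_one_iff hβ hδ2 hC
  have hno' (π : S) (hπ : A π = WithLp.toLp 2 w) : P π ≠ 0 :=
    fun hPπ => hno ⟨π, π.2, congrArg WithLp.ofLp hπ, hPπ⟩
  obtain ⟨π, hπ⟩ := exists_forall_modulusObjective_le A P (WithLp.toLp 2 w)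
    (hcont.comp continuous_subtype_val) hδ2 hC
  have hpos : 0 < g π := modulusObjective_pos hδ2 hC hno' π
  obtain ⟨hres, hpen⟩ := (hfeas (inv_pos.2 hpos).le π).1 (inv_mul_cancel₀ hpos.ne').le
  refine ⟨(g π)⁻¹, π, π.2, inv_pos.2 hpos, hres, hpen, ?_, fun β' π' hπ' hβ' hres' hpen' => ?_⟩
  · rw [hnorm]; exact norm_sub_pos_of_forall_modulusObjective_le hδ2 hC hno' hπ
  · have := (hfeas hβ' ⟨π', hπ'⟩).2 ⟨hres', hpen'⟩
    rw [mul_le_mul_iff_right₀ two_pos, inv_eq_one_div, le_div_iff₀ hpos]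
    exact (mul_le_mul_of_nonneg_left (hπ ⟨π', hπ'⟩) hβ').trans this

/-- If there is no `π ∈ S` with `Zπ = w` and `Pen π = 0`, then for any `δ > 0` the modulus
problem `ω(δ) = sup{2β : β‖w − Zπ‖₂ ≤ δ/2, β·Pen(π) ≤ C, β ≥ 0, π ∈ S}` has a maximizer
`(β*, π*)` with `β* > 0` and `‖w − Zπ*‖₂ > 0`. -/
theorem modulus_problem_has_maximizer {n k : ℕ} (S : Submodule ℝ (Fin k → ℝ))
    (Pen : (Fin k → ℝ) → ℝ)
    (htri : ∀ x y, x ∈ S → y ∈ S → Pen (x + y) ≤ Pen x + Pen y)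
    (hhom : ∀ (c : ℝ) (x), x ∈ S → Pen (c • x) = |c| * Pen x)
    (hcont : Continuous Pen)
    (Z : Matrix (Fin n) (Fin k) ℝ) (w : Fin n → ℝ) (hw : w ≠ 0)
    (C : ℝ) (hC : 0 < C)
    (hno : ¬ ∃ π ∈ S, Z.mulVec π = w ∧ Pen π = 0)
    (δ : ℝ) (hδ : 0 < δ) :
    ∃ β : ℝ, ∃ π ∈ S, 0 < β ∧
      β * l2norm (w - Z.mulVec π) ≤ δ / 2 ∧ β * Pen π ≤ C ∧
      0 < l2norm (w - Z.mulVec π) ∧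
      ∀ β' : ℝ, ∀ π' ∈ S, 0 ≤ β' →
        β' * l2norm (w - Z.mulVec π') ≤ δ / 2 → β' * Pen π' ≤ C →
        2 * β' ≤ 2 * β :=
  modulus_problem_has_maximizer_general S Pen htri hhom hcont Z w C hC hno δ hδ
end

section
/- Let π*_λ solve the penalized regression min_π ‖w − Zπ‖₂² subject to Pen(π) ≤ t_λ, with t_λ > 0 and ‖w − Zπ*_λ‖₂ > 0. Set β* = C/t_λ and δ = 2β*‖w − Zπ*_λ‖₂. Then the pair (β*, π*_λ) solves the modulus problem sup{2β : β‖w − Zπ‖₂ ≤ δ/2, β·Pen(π) ≤ C} with optimal value 2C/t_λ. -/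
open Matrix

/-- A penalty level `β` above `C / t` forces a modulus-feasible point into the constraint set
`g ≤ t` of the penalized problem, where `x₀` beats it; the residual constraint then
caps `β` by `C / t`. -/
theorem le_div_of_isMinOn_sublevel {α : Type*} {s : Set α} {f g : α → ℝ} {x₀ x : α}
    {β C t : ℝ} (hC : 0 < C) (ht : 0 < t) (hmin : IsMinOn f {y ∈ s | g y ≤ t} x₀)
    (hpos : 0 < f x₀) (hx : x ∈ s) (hfx : β * f x ≤ C / t * f x₀) (hgx : β * g x ≤ C) :
    β ≤ C / t := by
  by_contra! hβ
  have hβpos : 0 < β := (div_pos hC ht).trans hβ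
  have hgt : g x ≤ t := by
    have hCβ : C < β * t := (div_lt_iff₀ ht).mp hβ
    exact (lt_of_mul_lt_mul_left (hgx.trans_lt hCβ) hβpos.le).le
  have hf : f x₀ ≤ f x := hmin ⟨hx, hgt⟩
  have hscaled : β * f x₀ ≤ C / t * f x₀ := (mul_le_mul_of_nonneg_left hf hβpos.le).trans hfx
  exact hβ.not_ge (le_of_mul_le_mul_right hscaled hpos)

theorem penalized_regression_solves_modulus_general {n k : ℕ} (S : Submodule ℝ (Fin k → ℝ))
    (Pen : (Fin k → ℝ) → ℝ)
    (Z : Matrix (Fin n) (Fin k) ℝ) (w : Fin n → ℝ)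
    (C t : ℝ) (hC : 0 < C) (ht : 0 < t)
    (πs : Fin k → ℝ) (hfeas : Pen πs ≤ t)
    (hmin : ∀ π ∈ S, Pen π ≤ t → l2norm (w - Z.mulVec πs) ≤ l2norm (w - Z.mulVec π))
    (hres : 0 < l2norm (w - Z.mulVec πs)) :
    (C / t) * l2norm (w - Z.mulVec πs) ≤ (2 * (C / t) * l2norm (w - Z.mulVec πs)) / 2 ∧
    (C / t) * Pen πs ≤ C ∧
    2 * (C / t) = 2 * C / t ∧
    ∀ β : ℝ, ∀ π ∈ S, 0 ≤ β →
      β * l2norm (w - Z.mulVec π) ≤ (2 * (C / t) * l2norm (w - Z.mulVec πs)) / 2 →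
      β * Pen π ≤ C → 2 * β ≤ 2 * C / t := by
  refine ⟨le_of_eq (by ring), ?_, by ring, ?_⟩
  · calc C / t * Pen πs ≤ C / t * t := mul_le_mul_of_nonneg_left hfeas (div_pos hC ht).le
      _ = C := div_mul_cancel₀ C ht.ne'
  · intro β π hπ _ hfit hpen
    have hβ : β ≤ C / t :=
      le_div_of_isMinOn_sublevel (s := S) (f := fun π => l2norm (w - Z *ᵥ π)) hC ht
        (fun π hπ => hmin π hπ.1 hπ.2) hres hπ (by linarith) hpen
    rw [mul_div_assoc]
    linarith

/-- If `π*` solves the penalized regression `min_{π ∈ S} ‖w − Zπ‖₂²` s.t. `Pen π ≤ t` with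
`t > 0` and `‖w − Zπ*‖₂ > 0`, then setting `β* = C/t` and `δ = 2β*‖w − Zπ*‖₂`, the pair
`(β*, π*)` solves the modulus problem `sup{2β : β‖w − Zπ‖₂ ≤ δ/2, β·Pen(π) ≤ C, β ≥ 0, π ∈ S}`
with optimal value `2C/t`. -/
theorem penalized_regression_solves_modulus {n k : ℕ} (S : Submodule ℝ (Fin k → ℝ))
    (Pen : (Fin k → ℝ) → ℝ)
    (htri : ∀ x y, x ∈ S → y ∈ S → Pen (x + y) ≤ Pen x + Pen y)
    (hhom : ∀ (c : ℝ) (x), x ∈ S → Pen (c • x) = |c| * Pen x)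
    (Z : Matrix (Fin n) (Fin k) ℝ) (w : Fin n → ℝ)
    (C t : ℝ) (hC : 0 < C) (ht : 0 < t)
    (πs : Fin k → ℝ) (hπS : πs ∈ S) (hfeas : Pen πs ≤ t)
    (hmin : ∀ π ∈ S, Pen π ≤ t → l2norm (w - Z.mulVec πs) ≤ l2norm (w - Z.mulVec π))
    (hres : 0 < l2norm (w - Z.mulVec πs)) :
    (C / t) * l2norm (w - Z.mulVec πs) ≤ (2 * (C / t) * l2norm (w - Z.mulVec πs)) / 2 ∧
    (C / t) * Pen πs ≤ C ∧
    2 * (C / t) = 2 * C / t ∧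
    ∀ β : ℝ, ∀ π ∈ S, 0 ≤ β →
      β * l2norm (w - Z.mulVec π) ≤ (2 * (C / t) * l2norm (w - Z.mulVec πs)) / 2 →
      β * Pen π ≤ C → 2 * β ≤ 2 * C / t :=
  penalized_regression_solves_modulus_general S Pen Z w C t hC ht πs hfeas hmin hres
end

section
/- For the ℓ₂ penalty Pen(γ) = ‖Mγ‖₂ with the Lagrangian ridge propensity-score estimate π*_λ = (Z'Z + λM'M)⁻¹Z'w (assuming Z'Z + λM'M invertible), the estimator β̂_λ = ((w − Zπ*_λ)'Y)/((w − Zπ*_λ)'w) equals the first coordinate of (X'X + λ diag(0, M'M))⁻¹X'Y, where X = (w, Z), provided the latter matrix is invertible. -/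
open Matrix

/-- For the ℓ₂ penalty `Pen γ = ‖Mγ‖₂` and the ridge propensity-score estimate
`π* = (Z'Z + λM'M)⁻¹Z'w`, the estimator `β̂ = ((w − Zπ*)'Y)/((w − Zπ*)'w)` equals the first
coordinate of `(X'X + λ diag(0, M'M))⁻¹X'Y`, where `X = (w, Z)`. -/
theorem ridge_estimator_first_coordinate {n k k2 : ℕ}
    (w Y : Fin n → ℝ) (Z : Matrix (Fin n) (Fin k) ℝ) (M : Matrix (Fin k2) (Fin k) ℝ)
    (lam : ℝ) (hlam : 0 < lam)
    (X : Matrix (Fin n) (Fin (k + 1)) ℝ)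
    (hX : X = Matrix.of fun i j => Fin.cases (w i) (fun j' => Z i j') j)
    (D : Matrix (Fin (k + 1)) (Fin (k + 1)) ℝ)
    (hD : D = Matrix.of fun i j =>
      Fin.cases (0 : ℝ) (fun i' => Fin.cases (0 : ℝ) (fun j' => (Mᵀ * M) i' j') j) i)
    (hZinv : IsUnit (Zᵀ * Z + lam • (Mᵀ * M)).det)
    (hXinv : IsUnit (Xᵀ * X + lam • D).det)
    (πs : Fin k → ℝ)
    (hπ : πs = (Zᵀ * Z + lam • (Mᵀ * M))⁻¹.mulVec (Zᵀ.mulVec w))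
    (hden : (w - Z.mulVec πs) ⬝ᵥ w ≠ 0) :
    ((w - Z.mulVec πs) ⬝ᵥ Y) / ((w - Z.mulVec πs) ⬝ᵥ w)
      = ((Xᵀ * X + lam • D)⁻¹.mulVec (Xᵀ.mulVec Y)) 0 := by
  set B := Zᵀ * Z + lam • (Mᵀ * M) with hBdef
  have hBsymm : Bᵀ = B := by
    simp [hBdef, transpose_add, transpose_smul, transpose_mul, Matrix.mul_assoc]
  have hBinvsymm : (B⁻¹)ᵀ = B⁻¹ := by
    rw [Matrix.transpose_nonsing_inv, hBsymm]
  have hBB : B * B⁻¹ = 1 := Matrix.mul_nonsing_inv _ hZinv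
  have cancel : ∀ x, B.mulVec (B⁻¹.mulVec x) = x := fun x => by
    rw [Matrix.mulVec_mulVec, hBB, Matrix.one_mulVec]
  set β := ((w - Z.mulVec πs) ⬝ᵥ Y) / ((w - Z.mulVec πs) ⬝ᵥ w) with hβ
  set γ : Fin k → ℝ := B⁻¹.mulVec (Zᵀ.mulVec Y) - β • πs with hγ
  set v : Fin (k+1) → ℝ := Fin.cases β γ with hv
  -- B γ = Z'Y - β Z'w
  have hBγ : B.mulVec γ = Zᵀ.mulVec Y - β • (Zᵀ.mulVec w) := by
    rw [hγ, Matrix.mulVec_sub, Matrix.mulVec_smul, hπ, cancel, cancel]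
  -- w ⬝ (Zγ) in terms of dot products
  have hπdot : (Zᵀ.mulVec w) ⬝ᵥ πs = w ⬝ᵥ Z.mulVec πs := by
    rw [Matrix.dotProduct_mulVec w Z πs, ← Matrix.mulVec_transpose]
  have hwZγ : w ⬝ᵥ Z.mulVec γ = (Z.mulVec πs) ⬝ᵥ Y - β * (w ⬝ᵥ Z.mulVec πs) := by
    rw [Matrix.dotProduct_mulVec w Z γ, ← Matrix.mulVec_transpose, hγ,
      dotProduct_sub, dotProduct_smul, smul_eq_mul, hπdot]
    congr 1
    rw [Matrix.dotProduct_mulVec _ B⁻¹ _, ← Matrix.mulVec_transpose, hBinvsymm, ← hπ,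
      Matrix.dotProduct_mulVec πs Zᵀ Y, ← Matrix.mulVec_transpose, transpose_transpose]
  -- scalar equation (1)
  have h1 : w ⬝ᵥ (β • w + Z.mulVec γ) = w ⬝ᵥ Y := by
    rw [dotProduct_add, dotProduct_smul, smul_eq_mul, hwZγ]
    have hd : (w - Z.mulVec πs) ⬝ᵥ w = w ⬝ᵥ w - w ⬝ᵥ Z.mulVec πs := by
      rw [sub_dotProduct]; congr 1; rw [dotProduct_comm]
    have hnum : (w - Z.mulVec πs) ⬝ᵥ Y = w ⬝ᵥ Y - Z.mulVec πs ⬝ᵥ Y := by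
      rw [sub_dotProduct]
    have hden' : w ⬝ᵥ w - w ⬝ᵥ Z.mulVec πs ≠ 0 := by rw [← hd]; exact hden
    rw [hβ, hnum, hd]
    field_simp
    ring
  -- X applied to v
  have hXv : X.mulVec v = β • w + Z.mulVec γ := by
    funext i
    simp only [hX, Matrix.mulVec, dotProduct, Fin.sum_univ_succ, Matrix.of_apply,
      Fin.cases_zero, Fin.cases_succ, hv, Pi.add_apply, Pi.smul_apply, smul_eq_mul]
    ring_nf
  -- X' applied to any vector
  have hXt : ∀ u : Fin n → ℝ, Xᵀ.mulVec u = Fin.cases (w ⬝ᵥ u) (Zᵀ.mulVec u) := by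
    intro u
    funext j
    refine Fin.cases ?_ (fun j' => ?_) j <;>
      simp [hX, Matrix.mulVec, dotProduct, Matrix.transpose_apply]
  -- D applied to v
  have hDv : D.mulVec v = Fin.cases 0 ((Mᵀ * M).mulVec γ) := by
    funext i
    refine Fin.cases ?_ (fun i' => ?_) i <;>
      simp [hD, Matrix.mulVec, dotProduct, Fin.sum_univ_succ, hv]
  -- the key linear system
  have hkey : (Xᵀ * X + lam • D).mulVec v = Xᵀ.mulVec Y := by
    rw [Matrix.add_mulVec, ← Matrix.mulVec_mulVec, hXv, Matrix.smul_mulVec, hDv,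
      hXt (β • w + Z.mulVec γ), hXt Y]
    funext i
    refine Fin.cases ?_ (fun i' => ?_) i
    · simp [h1]
    · have h2 : Zᵀ.mulVec (β • w + Z.mulVec γ) i' + lam * ((Mᵀ * M).mulVec γ) i'
          = (Zᵀ.mulVec Y) i' := by
        have : β • Zᵀ.mulVec w + B.mulVec γ = Zᵀ.mulVec Y := by
          rw [hBγ]; abel
        have h3 := congrFun this i'
        simp only [hBdef, Matrix.add_mulVec, ← Matrix.mulVec_mulVec,
          Matrix.smul_mulVec, Pi.add_apply, Pi.smul_apply, smul_eq_mul] at h3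
        simp only [Matrix.mulVec_add, Matrix.mulVec_smul, Pi.add_apply, Pi.smul_apply,
          smul_eq_mul, ← Matrix.mulVec_mulVec]
        linarith [h3]
      simpa using h2
  -- conclude
  have : (Xᵀ * X + lam • D)⁻¹.mulVec (Xᵀ.mulVec Y) = v := by
    rw [← hkey, Matrix.mulVec_mulVec, Matrix.nonsing_inv_mul _ hXinv, Matrix.one_mulVec]
  rw [this]
  simp [hv]
end

section
/- With M chosen so that M'M = Z₂'(I − H_{Z₁})Z₂/n and in the ℓ₂-ridge setting, the estimator β̂_λ is the convex combination ω(λ)·β̂_short + (1 − ω(λ))·β̂_long where β̂_short = w'(I − H_{Z₁})Y / w'(I − H_{Z₁})w, β̂_long = w'(I − H_Z)Y / w'(I − H_Z)w, and ω(λ) = (λ/n)/(λ/n + ς²) with ς² = w'(I − H_Z)w / w'(I − H_{Z₁})w. -/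
open Matrix

/-- Projection matrix onto the column space of `A` (valid when `AᵀA` is invertible). -/
noncomputable def proj {n : ℕ} {ι : Type*} [Fintype ι] [DecidableEq ι]
    (A : Matrix (Fin n) ι ℝ) : Matrix (Fin n) (Fin n) ℝ :=
  A * (Aᵀ * A)⁻¹ * Aᵀ

lemma mul_submatrix_col {l m n o : Type*} [Fintype m] (M : Matrix l m ℝ) (N : Matrix m n ℝ)
    (g : o → n) : M * N.submatrix id g = (M * N).submatrix id g := by
  ext i j; simp [Matrix.mul_apply]

lemma proj_spec {n : ℕ} {ι : Type*} [Fintype ι] [DecidableEq ι]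
    (A : Matrix (Fin n) ι ℝ) (h : IsUnit (Aᵀ * A).det) :
    proj A * A = A := by
  calc proj A * A = A * ((Aᵀ * A)⁻¹ * (Aᵀ * A)) := by simp [proj, Matrix.mul_assoc]
  _ = A := by rw [Matrix.nonsing_inv_mul _ h, Matrix.mul_one]

lemma proj_symm {n : ℕ} {ι : Type*} [Fintype ι] [DecidableEq ι]
    (A : Matrix (Fin n) ι ℝ) : (proj A)ᵀ = proj A := by
  have h : ((Aᵀ * A)⁻¹)ᵀ = (Aᵀ * A)⁻¹ := by
    rw [Matrix.transpose_nonsing_inv, Matrix.transpose_mul, Matrix.transpose_transpose]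
  simp [proj, Matrix.transpose_mul, h, Matrix.mul_assoc]

lemma dot_mulVec_transpose {m n : Type*} [Fintype m] [Fintype n] (w : m → ℝ)
    (M : Matrix m n ℝ) (x : n → ℝ) : w ⬝ᵥ (M *ᵥ x) = (Mᵀ *ᵥ w) ⬝ᵥ x := by
  rw [Matrix.dotProduct_mulVec, Matrix.mulVec_transpose]
set_option maxHeartbeats 2000000 in
/-- With `M'M = Z₂'(I − H_{Z₁})Z₂/n`, the ridge-based estimator
`β̂_λ = e₁'(X'X + λ diag(0, M'M))⁻¹X'Y` is the convex combination
`ω(λ)·β̂_short + (1 − ω(λ))·β̂_long` with `ω(λ) = (λ/n)/(λ/n + ς²)` and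
`ς² = w'(I − H_Z)w / w'(I − H_{Z₁})w`. -/
theorem ridge_weighted_average_short_long {n k1 k2 : ℕ} (hn : 0 < n)
    (w Y : Fin n → ℝ)
    (Z1 : Matrix (Fin n) (Fin k1) ℝ) (Z2 : Matrix (Fin n) (Fin k2) ℝ)
    (lam : ℝ) (hlam : 0 < lam)
    (Z : Matrix (Fin n) (Fin k1 ⊕ Fin k2) ℝ)
    (hZ : Z = Matrix.of fun i j => Sum.elim (Z1 i) (Z2 i) j)
    (X : Matrix (Fin n) (Unit ⊕ (Fin k1 ⊕ Fin k2)) ℝ)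
    (hX : X = Matrix.of fun i j => Sum.elim (fun _ => w i) (Sum.elim (Z1 i) (Z2 i)) j)
    (D : Matrix (Unit ⊕ (Fin k1 ⊕ Fin k2)) (Unit ⊕ (Fin k1 ⊕ Fin k2)) ℝ)
    (hD : D = Matrix.of fun a b =>
      match a, b with
      | Sum.inr (Sum.inr i), Sum.inr (Sum.inr j) =>
          ((Z2ᵀ * ((1 : Matrix (Fin n) (Fin n) ℝ) - proj Z1) * Z2) i j) / n
      | _, _ => (0 : ℝ))
    (hZ1inv : IsUnit (Z1ᵀ * Z1).det)
    (hZinv : IsUnit (Zᵀ * Z).det)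
    (hXinv : IsUnit (Xᵀ * X + lam • D).det)
    (hlong : 0 < w ⬝ᵥ ((1 - proj Z) *ᵥ w))
    (hshort : 0 < w ⬝ᵥ ((1 - proj Z1) *ᵥ w)) :
    ((Xᵀ * X + lam • D)⁻¹ *ᵥ (Xᵀ *ᵥ Y)) (Sum.inl ())
      = ((lam / n) / (lam / n + (w ⬝ᵥ ((1 - proj Z) *ᵥ w)) / (w ⬝ᵥ ((1 - proj Z1) *ᵥ w))))
          * ((w ⬝ᵥ ((1 - proj Z1) *ᵥ Y)) / (w ⬝ᵥ ((1 - proj Z1) *ᵥ w)))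
        + (1 - (lam / n) / (lam / n + (w ⬝ᵥ ((1 - proj Z) *ᵥ w)) / (w ⬝ᵥ ((1 - proj Z1) *ᵥ w))))
          * ((w ⬝ᵥ ((1 - proj Z) *ᵥ Y)) / (w ⬝ᵥ ((1 - proj Z) *ᵥ w))) := by
  have hn' : (0:ℝ) < (n:ℝ) := by exact_mod_cast hn
  set P1 := proj Z1 with hP1
  set P := proj Z with hP
  set S : Matrix (Fin k2) (Fin k2) ℝ := Z2ᵀ * (1 - P1) * Z2 with hS
  have hP1Z1 : P1 * Z1 = Z1 := proj_spec Z1 hZ1inv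
  have hPZ : P * Z = Z := proj_spec Z hZinv
  have hP1T : P1ᵀ = P1 := proj_symm Z1
  have hPT : Pᵀ = P := proj_symm Z
  have hsub1 : Z.submatrix id Sum.inl = Z1 := by ext i j; simp [hZ]
  have hsub2 : Z.submatrix id Sum.inr = Z2 := by ext i j; simp [hZ]
  have hPZ1 : P * Z1 = Z1 := by rw [← hsub1, mul_submatrix_col, hPZ]
  have hPZ2 : P * Z2 = Z2 := by rw [← hsub2, mul_submatrix_col, hPZ]
  haveI : Invertible (Z1ᵀ * Z1) := (Z1ᵀ * Z1).invertibleOfIsUnitDet hZ1inv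
  have hblock : Zᵀ * Z = Matrix.fromBlocks (Z1ᵀ*Z1) (Z1ᵀ*Z2) (Z2ᵀ*Z1) (Z2ᵀ*Z2) := by
    ext i j
    rcases i with i | i <;> rcases j with j | j <;>
      simp [hZ, Matrix.mul_apply, Matrix.fromBlocks]
  have hSdet : IsUnit S.det := by
    have h1 : (Zᵀ*Z).det = (Z1ᵀ*Z1).det * (Z2ᵀ*Z2 - Z2ᵀ*Z1 * ⅟(Z1ᵀ*Z1) * (Z1ᵀ*Z2)).det := by
      rw [hblock, Matrix.det_fromBlocks₁₁]
    have h2 : Z2ᵀ*Z2 - Z2ᵀ*Z1 * ⅟(Z1ᵀ*Z1) * (Z1ᵀ*Z2) = S := by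
      rw [Matrix.invOf_eq_nonsing_inv, hS, hP1, proj]
      simp [Matrix.mul_sub, Matrix.sub_mul, Matrix.mul_assoc]
    rw [h2] at h1
    rw [h1] at hZinv
    exact (IsUnit.mul_iff.mp hZinv).2
  have hSsymm : Sᵀ = S := by
    rw [hS]
    simp [Matrix.transpose_mul, Matrix.transpose_sub, hP1T, Matrix.mul_assoc]
  have hSinvT : (S⁻¹)ᵀ = S⁻¹ := by rw [Matrix.transpose_nonsing_inv, hSsymm]
  have hSS : S * S⁻¹ = 1 := Matrix.mul_nonsing_inv _ hSdet
  have hSiS : S⁻¹ * S = 1 := Matrix.nonsing_inv_mul _ hSdet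
  set Q : Matrix (Fin n) (Fin n) ℝ := ((1 - P1) * Z2) * S⁻¹ * (Z2ᵀ * (1 - P1)) with hQ
  have hQT : Qᵀ = Q := by
    rw [hQ]
    simp [Matrix.transpose_mul, Matrix.transpose_sub, hP1T, hSinvT, Matrix.mul_assoc]
  have h1P1Z1 : (1 - P1) * Z1 = 0 := by
    rw [Matrix.sub_mul, hP1Z1, Matrix.one_mul, sub_self]
  have hQZ1 : Q * Z1 = 0 := by
    simp [hQ, Matrix.mul_assoc, h1P1Z1]
  have hQZ2 : Q * Z2 = (1 - P1) * Z2 := by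
    calc Q * Z2 = ((1 - P1) * Z2) * (S⁻¹ * S) := by rw [hQ, hS]; simp [Matrix.mul_assoc]
    _ = (1 - P1) * Z2 := by rw [hSiS, Matrix.mul_one]
  have e1 : (P1 + Q) * Z1 = Z1 := by rw [Matrix.add_mul, hP1Z1, hQZ1, add_zero]
  have e2 : (P1 + Q) * Z2 = Z2 := by
    rw [Matrix.add_mul, hQZ2, ← Matrix.add_mul]
    simp
  have hRZ : (P1 + Q) * Z = Z := by
    ext i c
    rcases c with j | j
    · have h := congrFun (congrFun (mul_submatrix_col (P1+Q) Z Sum.inl) i) j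
      rw [hsub1, e1] at h
      simpa [hZ] using h.symm
    · have h := congrFun (congrFun (mul_submatrix_col (P1+Q) Z Sum.inr) i) j
      rw [hsub2, e2] at h
      simpa [hZ] using h.symm
  have hRP : (P1 + Q) * P = P := by
    calc (P1 + Q) * P = ((P1 + Q) * Z) * ((Zᵀ*Z)⁻¹ * Zᵀ) := by
          rw [hP, proj]; simp [Matrix.mul_assoc]
    _ = P := by rw [hRZ, hP, proj, Matrix.mul_assoc]
  have hPP1 : P * P1 = P1 := by
    calc P * P1 = (P * Z1) * ((Z1ᵀ*Z1)⁻¹ * Z1ᵀ) := by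
          rw [hP1, proj]; simp [Matrix.mul_assoc]
    _ = P1 := by rw [hPZ1, hP1, proj, Matrix.mul_assoc]
  have hPQ : P * Q = Q := by
    have h1 : P * ((1 - P1) * Z2) = (1 - P1) * Z2 := by
      calc P * ((1 - P1) * Z2) = P * Z2 - (P * P1) * Z2 := by
            rw [Matrix.sub_mul, Matrix.one_mul, Matrix.mul_sub, Matrix.mul_assoc]
      _ = (1 - P1) * Z2 := by rw [hPZ2, hPP1, Matrix.sub_mul, Matrix.one_mul]
    calc P * Q = (P * ((1 - P1) * Z2)) * (S⁻¹ * (Z2ᵀ * (1 - P1))) := by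
          rw [hQ]; simp [Matrix.mul_assoc]
    _ = Q := by rw [h1]; rw [hQ]; simp [Matrix.mul_assoc]
  have hPR : P * (P1 + Q) = P1 + Q := by rw [Matrix.mul_add, hPP1, hPQ]
  have hPeq : P = P1 + Q := by
    calc P = Pᵀ := hPT.symm
    _ = ((P1 + Q) * P)ᵀ := by rw [hRP]
    _ = Pᵀ * (P1 + Q)ᵀ := Matrix.transpose_mul _ _
    _ = P * (P1 + Q) := by rw [hPT, Matrix.transpose_add, hP1T, hQT]
    _ = P1 + Q := hPR
  set s1 : ℝ := w ⬝ᵥ ((1 - P1) *ᵥ w) with hs1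
  set s : ℝ := w ⬝ᵥ ((1 - P) *ᵥ w) with hs
  set t1 : ℝ := w ⬝ᵥ ((1 - P1) *ᵥ Y) with ht1
  set t : ℝ := w ⬝ᵥ ((1 - P) *ᵥ Y) with ht
  set a : Fin k2 → ℝ := (Z2ᵀ * (1 - P1)) *ᵥ w with ha
  set b : Fin k2 → ℝ := (Z2ᵀ * (1 - P1)) *ᵥ Y with hb
  have hT12 : ((1 - P1) * Z2)ᵀ = Z2ᵀ * (1 - P1) := by
    rw [Matrix.transpose_mul, Matrix.transpose_sub, Matrix.transpose_one, hP1T]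
  have key : ∀ v : Fin n → ℝ,
      w ⬝ᵥ ((1 - P) *ᵥ v)
        = w ⬝ᵥ ((1 - P1) *ᵥ v) - a ⬝ᵥ (S⁻¹ *ᵥ ((Z2ᵀ * (1 - P1)) *ᵥ v)) := by
    intro v
    have hsplit : (1 : Matrix (Fin n) (Fin n) ℝ) - P = (1 - P1) - Q := by
      rw [hPeq]; abel
    have hQv : Q *ᵥ v = ((1 - P1) * Z2) *ᵥ (S⁻¹ *ᵥ ((Z2ᵀ * (1 - P1)) *ᵥ v)) := by
      rw [Matrix.mulVec_mulVec, Matrix.mulVec_mulVec, hQ, Matrix.mul_assoc]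
    have h2 : w ⬝ᵥ (Q *ᵥ v) = a ⬝ᵥ (S⁻¹ *ᵥ ((Z2ᵀ * (1 - P1)) *ᵥ v)) := by
      rw [hQv, dot_mulVec_transpose, hT12, ← ha]
    rw [hsplit, Matrix.sub_mulVec, dotProduct_sub, h2]
  have hSaa : a ⬝ᵥ (S⁻¹ *ᵥ a) = s1 - s := by
    have h := key w
    rw [← hs, ← hs1, ← ha] at h
    linarith
  have hSab : a ⬝ᵥ (S⁻¹ *ᵥ b) = t1 - t := by
    have h := key Y
    rw [← ht, ← ht1, ← hb] at h
    linarith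
  have hτ : 0 < lam / (n:ℝ) := div_pos hlam hn'
  have h1τ : (0:ℝ) < 1 + lam / n := by linarith
  have hden : (0:ℝ) < lam / n * s1 + s := by
    have := mul_pos hτ hshort
    linarith [hlong]
  set β₀ : ℝ := (lam / n * t1 + t) / (lam / n * s1 + s) with hβ₀
  set γ₂ : Fin k2 → ℝ := (1 + lam / n)⁻¹ • (S⁻¹ *ᵥ (b - β₀ • a)) with hγ₂
  set u : Fin n → ℝ := β₀ • w + Z2 *ᵥ γ₂ with hu
  set γ₁ : Fin k1 → ℝ := (Z1ᵀ * Z1)⁻¹ *ᵥ (Z1ᵀ *ᵥ (Y - u)) with hγ₁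
  set β : (Unit ⊕ (Fin k1 ⊕ Fin k2)) → ℝ :=
    Sum.elim (fun _ => β₀) (Sum.elim γ₁ γ₂) with hβ
  have hXβ : X *ᵥ β = β₀ • w + Z1 *ᵥ γ₁ + Z2 *ᵥ γ₂ := by
    ext i
    simp [hX, hβ, Matrix.mulVec, dotProduct, Fintype.sum_sum_type]
    ring
  have hv : Y - X *ᵥ β = (1 - P1) *ᵥ (Y - u) := by
    have hZγ1 : Z1 *ᵥ γ₁ = P1 *ᵥ (Y - u) := by
      rw [hγ₁, Matrix.mulVec_mulVec, Matrix.mulVec_mulVec, hP1, proj, Matrix.mul_assoc]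
    rw [hXβ, hZγ1, Matrix.sub_mulVec, Matrix.one_mulVec, hu]
    abel
  have hZ1t0 : Z1ᵀ * (1 - P1) = 0 := by
    have h0 : Z1ᵀ * P1 = Z1ᵀ := by
      rw [hP1, proj, ← Matrix.mul_assoc, ← Matrix.mul_assoc,
        Matrix.mul_nonsing_inv _ hZ1inv, Matrix.one_mul]
    rw [Matrix.mul_sub, Matrix.mul_one, h0, sub_self]
  have hE2 : Z1ᵀ *ᵥ (X *ᵥ β) = Z1ᵀ *ᵥ Y := by
    have h1 : Z1ᵀ *ᵥ (Y - X *ᵥ β) = 0 := by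
      rw [hv, Matrix.mulVec_mulVec, hZ1t0, Matrix.zero_mulVec]
    rw [Matrix.mulVec_sub] at h1
    exact (sub_eq_zero.mp h1).symm
  have hSγ : S *ᵥ γ₂ = (1 + lam / n)⁻¹ • (b - β₀ • a) := by
    rw [hγ₂, Matrix.mulVec_smul, Matrix.mulVec_mulVec, hSS, Matrix.one_mulVec]
  have hba : b - β₀ • a = (1 + lam / n) • (S *ᵥ γ₂) := by
    rw [hSγ, smul_smul, mul_inv_cancel₀ (ne_of_gt h1τ), one_smul]
  have hZ2v : Z2ᵀ *ᵥ (Y - X *ᵥ β) = b - β₀ • a - S *ᵥ γ₂ := by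
    rw [hv, Matrix.mulVec_mulVec]
    rw [hu, Matrix.mulVec_sub, Matrix.mulVec_add, Matrix.mulVec_smul,
      Matrix.mulVec_mulVec]
    rw [← hb, ← ha, ← hS]
    abel
  have hE3 : Z2ᵀ *ᵥ (X *ᵥ β) + (lam / n) • (S *ᵥ γ₂) = Z2ᵀ *ᵥ Y := by
    have h1 := hZ2v
    rw [hba] at h1
    rw [Matrix.mulVec_sub] at h1
    have h2 : (1 + lam / n) • (S *ᵥ γ₂) - S *ᵥ γ₂ = (lam / n) • (S *ᵥ γ₂) := by
      rw [add_smul, one_smul, add_sub_cancel_left]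
    rw [h2] at h1
    ext j
    have := congrFun h1 j
    simp only [Pi.sub_apply, Pi.add_apply, Pi.smul_apply, smul_eq_mul] at this ⊢
    linarith
  have haγ : a ⬝ᵥ γ₂ = (1 + lam / n)⁻¹ * ((t1 - t) - β₀ * (s1 - s)) := by
    rw [hγ₂, dotProduct_smul, smul_eq_mul]
    congr 1
    rw [Matrix.mulVec_sub, Matrix.mulVec_smul, dotProduct_sub, dotProduct_smul,
      hSab, hSaa, smul_eq_mul]
  have hE1 : w ⬝ᵥ (X *ᵥ β) = w ⬝ᵥ Y := by
    have h1 : w ⬝ᵥ (Y - X *ᵥ β) = t1 - β₀ * s1 - a ⬝ᵥ γ₂ := by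
      rw [hv, hu, Matrix.mulVec_sub, Matrix.mulVec_add, dotProduct_sub, dotProduct_add,
        ← ht1]
      have e1 : w ⬝ᵥ ((1 - P1) *ᵥ (β₀ • w)) = β₀ * s1 := by
        rw [Matrix.mulVec_smul, dotProduct_smul, smul_eq_mul, ← hs1]
      have e2 : w ⬝ᵥ ((1 - P1) *ᵥ (Z2 *ᵥ γ₂)) = a ⬝ᵥ γ₂ := by
        rw [Matrix.mulVec_mulVec, dot_mulVec_transpose, hT12, ← ha]
      rw [e1, e2]
      ring
    rw [haγ] at h1
    have h3 : t1 - β₀ * s1 - (1 + lam / n)⁻¹ * ((t1 - t) - β₀ * (s1 - s)) = 0 := by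
      rw [hβ₀]
      field_simp
      ring
    rw [h3, dotProduct_sub] at h1
    linarith
  have hD1 : ∀ p, D (Sum.inl ()) p = 0 := by
    intro p; rw [hD]; rcases p with _ | (p | p) <;> rfl
  have hD2 : ∀ (j : Fin k1) p, D (Sum.inr (Sum.inl j)) p = 0 := by
    intro j p; rw [hD]; rcases p with _ | (p | p) <;> rfl
  have hD3 : ∀ (j : Fin k2) (p),
      D (Sum.inr (Sum.inr j)) p
        = Sum.elim (fun _ : Unit => (0:ℝ)) (Sum.elim (fun _ : Fin k1 => (0:ℝ))
            (fun j' => S j j' / n)) p := by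
    intro j p; rw [hD]; rcases p with _ | (p | p) <;> rfl
  have hXTw : ∀ v : Fin n → ℝ, (Xᵀ *ᵥ v) (Sum.inl ()) = w ⬝ᵥ v := by
    intro v; simp [hX, Matrix.mulVec, dotProduct]
  have hXT1 : ∀ (v : Fin n → ℝ) (j : Fin k1),
      (Xᵀ *ᵥ v) (Sum.inr (Sum.inl j)) = (Z1ᵀ *ᵥ v) j := by
    intro v j; simp [hX, Matrix.mulVec, dotProduct]
  have hXT2 : ∀ (v : Fin n → ℝ) (j : Fin k2),
      (Xᵀ *ᵥ v) (Sum.inr (Sum.inr j)) = (Z2ᵀ *ᵥ v) j := by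
    intro v j; simp [hX, Matrix.mulVec, dotProduct]
  have hfinal : (Xᵀ * X + lam • D) *ᵥ β = Xᵀ *ᵥ Y := by
    have hrw : (Xᵀ * X + lam • D) *ᵥ β = Xᵀ *ᵥ (X *ᵥ β) + lam • (D *ᵥ β) := by
      rw [Matrix.add_mulVec, ← Matrix.mulVec_mulVec, Matrix.smul_mulVec]
    rw [hrw]
    ext c
    rcases c with _ | (j | j)
    · have hD0 : (D *ᵥ β) (Sum.inl ()) = 0 := by
        simp [Matrix.mulVec, dotProduct, hD1]
      simp only [Pi.add_apply, Pi.smul_apply, smul_eq_mul, hD0, mul_zero, add_zero]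
      rw [hXTw, hXTw]
      exact hE1
    · have hD0 : (D *ᵥ β) (Sum.inr (Sum.inl j)) = 0 := by
        simp [Matrix.mulVec, dotProduct, hD2]
      simp only [Pi.add_apply, Pi.smul_apply, smul_eq_mul, hD0, mul_zero, add_zero]
      rw [hXT1, hXT1]
      exact congrFun hE2 j
    · have hDj : (D *ᵥ β) (Sum.inr (Sum.inr j)) = ((S *ᵥ γ₂) j) / n := by
        have e : (D *ᵥ β) (Sum.inr (Sum.inr j)) = ∑ j', (S j j' / n) * γ₂ j' := by
          simp [Matrix.mulVec, dotProduct, hD3, Fintype.sum_sum_type, hβ]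
        rw [e]
        rw [show ((S *ᵥ γ₂) j) / n = ∑ j', (S j j' * γ₂ j') / n from by
          rw [← Finset.sum_div]; rfl]
        exact Finset.sum_congr rfl fun j' _ => by ring
      simp only [Pi.add_apply, Pi.smul_apply, smul_eq_mul, hDj]
      rw [hXT2, hXT2]
      have h := congrFun hE3 j
      simp only [Pi.add_apply, Pi.smul_apply, smul_eq_mul] at h
      rw [show lam * ((S *ᵥ γ₂) j / n) = lam / n * (S *ᵥ γ₂) j from by ring]
      exact h
  have hsolve : (Xᵀ * X + lam • D)⁻¹ *ᵥ (Xᵀ *ᵥ Y) = β := by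
    rw [← hfinal, Matrix.mulVec_mulVec, Matrix.nonsing_inv_mul _ hXinv,
      Matrix.one_mulVec]
  rw [hsolve]
  show β₀ = _
  rw [hβ₀]
  have hs1ne : s1 ≠ 0 := ne_of_gt hshort
  have hsne : s ≠ 0 := ne_of_gt hlong
  have hdenne : lam / (n:ℝ) * s1 + s ≠ 0 := ne_of_gt hden
  have hd2 : lam / (n:ℝ) + s / s1 ≠ 0 := by
    exact ne_of_gt (add_pos hτ (div_pos hlong hshort))
  field_simp
  ring
end

section
/- Coverage of the bias-aware fixed-length CI in the Gaussian model: if β̂ = a'Y with Y = wβ + Zγ + ε, ε ~ N(0, σ²Iₙ), a'w = 1, and |a'Zγ| ≤ B̄ for all γ ∈ Γ, then for every β ∈ R and γ ∈ Γ, P(|β̂ − β| ≤ cv_α(B̄/√V)·√V) ≥ 1 − α, where V = σ²a'a and cv_α(t) is the 1−α quantile of |N(t,1)|. -/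
/-!
Since `a ⬝ᵥ w = 1`, the error of the estimator is `a ⬝ᵥ Y - β = a ⬝ᵥ ε + a ⬝ᵥ Z γ`, a Gaussian
with variance `V` and mean `b √V` where `|b| ≤ B̄ / √V`. After standardising, the coverage
probability is `r(b, c) = P(|N(b, 1)| ≤ c)` at `c = cv_α(B̄ / √V)`. Writing
`r(t, c) = Φ(c - t) - Φ(-c - t)`, its derivative in `t` is `φ(-c - t) - φ(c - t) ≤ 0` for `t ≥ 0`,
and `r` is even in `t`, so `r(b, c) ≥ r(B̄ / √V, c)`. Finally `r(t, ·)` is continuous on `[0, ∞)`,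
so the infimum `cv_α(t)` of the closed set `{c | 1 - α ≤ r(t, c)}` belongs to it.
-/

open Matrix MeasureTheory ProbabilityTheory

/-- `cv α t`: the `1−α` quantile of `|N(t,1)|`. -/
noncomputable def cv (α t : ℝ) : ℝ :=
  sInf {c : ℝ | 1 - α ≤ ((gaussianReal t 1) {x : ℝ | |x| ≤ c}).toReal}

open Real Set Filter Topology
open scoped NNReal

section GaussianSums

variable {Ω ι : Type*} [MeasurableSpace Ω] {P : Measure Ω} [IsProbabilityMeasure P]

lemma iIndepFun.map_finsetSum_eq_gaussianReal {X : ι → Ω → ℝ} (hX : ∀ i, Measurable (X i))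
    (hindep : iIndepFun X P) {μ : ι → ℝ} {v : ι → ℝ≥0}
    (hlaw : ∀ i, P.map (X i) = gaussianReal (μ i) (v i)) (s : Finset ι) :
    P.map (∑ i ∈ s, X i) = gaussianReal (∑ i ∈ s, μ i) (∑ i ∈ s, v i) := by
  classical
  induction s using Finset.induction_on with
  | empty => simp [Pi.zero_def, Measure.map_const, gaussianReal_zero_var]
  | insert i s hi ih =>
    simp only [Finset.sum_insert hi]
    exact gaussianReal_add_gaussianReal_of_indepFun
      (hindep.indepFun_finsetSum_of_notMem hX hi).symm (hlaw i) ih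

lemma iIndepFun.map_dotProduct_eq_gaussianReal [Fintype ι] (a : ι → ℝ) {ε : Ω → ι → ℝ}
    (hmeas : ∀ i, Measurable fun ω ↦ ε ω i) (hindep : iIndepFun (fun i ω ↦ ε ω i) P)
    {μ : ι → ℝ} {v : ι → ℝ≥0} (hlaw : ∀ i, P.map (fun ω ↦ ε ω i) = gaussianReal (μ i) (v i)) :
    P.map (fun ω ↦ a ⬝ᵥ ε ω)
      = gaussianReal (a ⬝ᵥ μ) (∑ i, .mk (a i ^ 2) (sq_nonneg _) * v i) := by
  have hsum : (fun ω ↦ a ⬝ᵥ ε ω) = ∑ i, fun ω ↦ a i * ε ω i := by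
    ext ω
    simp [dotProduct]
  rw [hsum]
  refine iIndepFun.map_finsetSum_eq_gaussianReal (fun i ↦ (hmeas i).const_mul (a i))
    (hindep.comp (fun i x ↦ a i * x) fun i ↦ measurable_const_mul (a i)) (fun i ↦ ?_) _
  rw [show (fun ω ↦ a i * ε ω i) = (a i * ·) ∘ (fun ω ↦ ε ω i) from rfl,
    ← Measure.map_map (measurable_const_mul (a i)) (hmeas i), hlaw i, gaussianReal_map_const_mul]

lemma map_dotProduct_sub_eq_gaussianReal [Fintype ι] {κ : Type*} [Fintype κ] {w a : ι → ℝ}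
    (haw : a ⬝ᵥ w = 1) (Z : Matrix ι κ ℝ) (β σ : ℝ) (γ : κ → ℝ) {ε Y : Ω → ι → ℝ}
    (hmeas : ∀ i, Measurable fun ω ↦ ε ω i) (hindep : iIndepFun (fun i ω ↦ ε ω i) P)
    (hgauss : ∀ i, P.map (fun ω ↦ ε ω i) = gaussianReal 0 (σ ^ 2).toNNReal)
    (hY : ∀ ω, Y ω = β • w + Z *ᵥ γ + ε ω) :
    P.map (fun ω ↦ a ⬝ᵥ Y ω - β)
      = gaussianReal (a ⬝ᵥ (Z *ᵥ γ)) (σ ^ 2 * (a ⬝ᵥ a)).toNNReal := by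
  have hresid : (fun ω ↦ a ⬝ᵥ Y ω - β) = (· + a ⬝ᵥ (Z *ᵥ γ)) ∘ fun ω ↦ a ⬝ᵥ ε ω := by
    ext ω
    simp only [Function.comp_apply, hY, dotProduct_add, dotProduct_smul, haw, smul_eq_mul]
    ring
  have hmeas_noise : Measurable fun ω ↦ a ⬝ᵥ ε ω := by
    simp only [dotProduct]
    fun_prop
  rw [hresid, ← Measure.map_map (measurable_add_const _) hmeas_noise,
    iIndepFun.map_dotProduct_eq_gaussianReal a hmeas hindep hgauss, gaussianReal_map_add_const]
  congr 1
  · simp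
  · ext
    have hV : 0 ≤ σ ^ 2 * (a ⬝ᵥ a) :=
      mul_nonneg (sq_nonneg σ) (Finset.sum_nonneg fun i _ ↦ mul_self_nonneg (a i))
    rw [Real.coe_toNNReal _ hV]
    simp only [NNReal.coe_sum, NNReal.coe_mul, NNReal.coe_mk, Real.coe_toNNReal _ (sq_nonneg σ),
      dotProduct, Finset.mul_sum]
    exact Finset.sum_congr rfl fun i _ ↦ by ring

end GaussianSums

noncomputable def gaussianCoverage (t c : ℝ) : ℝ := ((gaussianReal t 1) {x : ℝ | |x| ≤ c}).toReal

lemma toReal_measure_abs_le_mul_sqrt_eq_gaussianCoverage {Ω : Type*} [MeasurableSpace Ω]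
    {P : Measure Ω} {T : Ω → ℝ} {m V : ℝ} (hV : 0 < V)
    (hlaw : P.map T = gaussianReal m V.toNNReal) (c : ℝ) :
    (P {ω | |T ω| ≤ c * √V}).toReal = gaussianCoverage (m / √V) c := by
  have hsqrtV : 0 < √V := sqrt_pos.2 hV
  have hT : AEMeasurable T P := .of_map_ne_zero (by simp [hlaw, NeZero.ne])
  have hvar : (V.toNNReal / .mk (√V ^ 2) (sq_nonneg _) : ℝ≥0) = 1 := by
    rw [div_eq_one_iff_eq (by simp [← NNReal.coe_ne_zero, hsqrtV.ne'])]
    ext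
    simp [sq_sqrt hV.le, hV.le]
  have hset : {ω | |T ω| ≤ c * √V} = (fun ω ↦ T ω / √V) ⁻¹' {x | |x| ≤ c} := by
    ext ω
    simp [abs_div, abs_of_pos hsqrtV, div_le_iff₀ hsqrtV]
  rw [gaussianCoverage, hset, ← Measure.map_apply_of_aemeasurable (hT.div_const _)
      (measurableSet_le (by fun_prop) (by fun_prop)),
    show (fun ω ↦ T ω / √V) = (· / √V) ∘ T from rfl,
    ← AEMeasurable.map_map_of_aemeasurable (by fun_prop) hT, hlaw, gaussianReal_map_div_const,
    hvar]

noncomputable def stdGaussianPrimitive (u : ℝ) : ℝ := ∫ x in (0 : ℝ)..u, gaussianPDFReal 0 1 x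

lemma continuous_gaussianPDFReal (μ : ℝ) (v : ℝ≥0) : Continuous (gaussianPDFReal μ v) := by
  unfold gaussianPDFReal
  fun_prop

lemma hasDerivAt_stdGaussianPrimitive (u : ℝ) :
    HasDerivAt stdGaussianPrimitive (gaussianPDFReal 0 1 u) u :=
  intervalIntegral.integral_hasDerivAt_right (integrable_gaussianPDFReal 0 1).intervalIntegrable
    (continuous_gaussianPDFReal 0 1).aestronglyMeasurable.stronglyMeasurableAtFilter
    (continuous_gaussianPDFReal 0 1).continuousAt

@[fun_prop]
lemma continuous_stdGaussianPrimitive : Continuous stdGaussianPrimitive :=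
  continuous_iff_continuousAt.2 fun u ↦ (hasDerivAt_stdGaussianPrimitive u).continuousAt

lemma gaussianPDFReal_zero_le_of_abs_le {v : ℝ≥0} {u w : ℝ} (h : |w| ≤ |u|) :
    gaussianPDFReal 0 v u ≤ gaussianPDFReal 0 v w := by
  have hsq : w ^ 2 ≤ u ^ 2 := sq_le_sq.2 h
  simp only [gaussianPDFReal, sub_zero]
  gcongr

lemma gaussianCoverage_of_neg {t c : ℝ} (hc : c < 0) : gaussianCoverage t c = 0 := by
  have hempty : {x : ℝ | |x| ≤ c} = ∅ :=
    eq_empty_of_forall_notMem fun x hx ↦ (hc.trans_le (abs_nonneg x)).not_ge hx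
  simp [gaussianCoverage, hempty]

lemma gaussianCoverage_eq_intervalIntegral (t : ℝ) {c : ℝ} (hc : 0 ≤ c) :
    gaussianCoverage t c = ∫ x in (-c)..c, gaussianPDFReal t 1 x := by
  have hset : {x : ℝ | |x| ≤ c} = Icc (-c) c := by
    ext x
    simp [abs_le]
  rw [gaussianCoverage, hset, gaussianReal_apply_eq_integral t one_ne_zero, ENNReal.toReal_ofReal
    (setIntegral_nonneg measurableSet_Icc fun x _ ↦ gaussianPDFReal_nonneg _ _ _),
    intervalIntegral.integral_of_le (by linarith), integral_Icc_eq_integral_Ioc]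

lemma gaussianCoverage_eq_stdGaussianPrimitive (t : ℝ) {c : ℝ} (hc : 0 ≤ c) :
    gaussianCoverage t c = stdGaussianPrimitive (c - t) - stdGaussianPrimitive (-c - t) := by
  have hshift : ∀ x, gaussianPDFReal t 1 x = gaussianPDFReal 0 1 (x - t) := fun x ↦ by
    rw [gaussianPDFReal_sub, zero_add]
  simp_rw [gaussianCoverage_eq_intervalIntegral t hc, hshift,
    intervalIntegral.integral_comp_sub_right (gaussianPDFReal 0 1), stdGaussianPrimitive]
  rw [intervalIntegral.integral_interval_sub_left
    (integrable_gaussianPDFReal 0 1).intervalIntegrable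
    (integrable_gaussianPDFReal 0 1).intervalIntegrable]

lemma gaussianCoverage_neg (t c : ℝ) : gaussianCoverage (-t) c = gaussianCoverage t c := by
  have hset : (fun x : ℝ ↦ -x) ⁻¹' {x | |x| ≤ c} = {x | |x| ≤ c} := by
    ext x
    simp
  rw [gaussianCoverage, ← gaussianReal_map_neg, Measure.map_apply measurable_neg
    (measurableSet_le (by fun_prop) (by fun_prop)), hset, gaussianCoverage]

lemma tendsto_gaussianCoverage_atTop (t : ℝ) : Tendsto (gaussianCoverage t) atTop (𝓝 1) := by
  have hlim := intervalIntegral_tendsto_integral (integrable_gaussianPDFReal t 1)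
    tendsto_neg_atTop_atBot tendsto_id
  rw [integral_gaussianPDFReal_eq_one t one_ne_zero] at hlim
  refine hlim.congr' ?_
  filter_upwards [eventually_ge_atTop 0] with c hc
  exact (gaussianCoverage_eq_intervalIntegral t hc).symm

lemma antitoneOn_gaussianCoverage {c : ℝ} (hc : 0 ≤ c) :
    AntitoneOn (gaussianCoverage · c) (Ici 0) := by
  have hderiv : ∀ t, HasDerivAt
      (fun t ↦ stdGaussianPrimitive (c - t) - stdGaussianPrimitive (-c - t))
      (gaussianPDFReal 0 1 (-c - t) - gaussianPDFReal 0 1 (c - t)) t := fun t ↦ by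
    refine (((hasDerivAt_stdGaussianPrimitive (c - t)).comp t
      ((hasDerivAt_id t).const_sub c)).sub ((hasDerivAt_stdGaussianPrimitive (-c - t)).comp t
        ((hasDerivAt_id t).const_sub (-c)))).congr_deriv ?_
    ring
  simp_rw [gaussianCoverage_eq_stdGaussianPrimitive _ hc]
  refine antitoneOn_of_deriv_nonpos (convex_Ici 0)
    (fun t _ ↦ (hderiv t).continuousAt.continuousWithinAt)
    (fun t _ ↦ (hderiv t).differentiableAt.differentiableWithinAt) fun t ht ↦ ?_
  rw [interior_Ici, mem_Ioi] at ht
  rw [(hderiv t).deriv, sub_nonpos]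
  refine gaussianPDFReal_zero_le_of_abs_le ?_
  rw [abs_of_nonpos (show -c - t ≤ 0 by linarith), abs_le]
  constructor <;> linarith

lemma gaussianCoverage_le_of_abs_le {b t : ℝ} (h : |b| ≤ |t|) (c : ℝ) :
    gaussianCoverage t c ≤ gaussianCoverage b c := by
  rcases lt_or_ge c 0 with hc | hc
  · simp [gaussianCoverage_of_neg hc]
  have habs : ∀ s, gaussianCoverage |s| c = gaussianCoverage s c := fun s ↦ by
    rcases abs_choice s with hs | hs <;> rw [hs]
    exact gaussianCoverage_neg s c
  rw [← habs t, ← habs b]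
  exact antitoneOn_gaussianCoverage hc (abs_nonneg b) (abs_nonneg t) h

lemma le_gaussianCoverage_cv {α : ℝ} (hα0 : 0 < α) (hα1 : α < 1) (t : ℝ) :
    1 - α ≤ gaussianCoverage t (cv α t) := by
  set S := {c | 1 - α ≤ gaussianCoverage t c}
  have hS_nonneg : ∀ c ∈ S, 0 ≤ c := fun c hc ↦ by
    by_contra! hneg
    have : 1 - α ≤ 0 := gaussianCoverage_of_neg (t := t) hneg ▸ hc
    linarith
  have hS_closed : IsClosed S := by
    have hS : S = Ici 0 ∩
        {c | 1 - α ≤ stdGaussianPrimitive (c - t) - stdGaussianPrimitive (-c - t)} := by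
      ext c
      exact ⟨fun hc ↦ ⟨hS_nonneg c hc,
        hc.trans_eq (gaussianCoverage_eq_stdGaussianPrimitive t (hS_nonneg c hc))⟩,
        fun ⟨hc, hcov⟩ ↦ hcov.trans_eq (gaussianCoverage_eq_stdGaussianPrimitive t hc).symm⟩
    rw [hS]
    exact isClosed_Ici.inter (isClosed_le continuous_const (by fun_prop))
  have hS_nonempty : S.Nonempty :=
    ((tendsto_gaussianCoverage_atTop t).eventually_const_le (by linarith)).exists
  exact hS_closed.csInf_mem hS_nonempty ⟨0, hS_nonneg⟩

theorem bias_aware_flci_coverage_general {n k : ℕ}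
    (w : Fin n → ℝ) (Z : Matrix (Fin n) (Fin k) ℝ) (a : Fin n → ℝ) (ha : a ≠ 0)
    (haw : a ⬝ᵥ w = 1)
    (Γ : Set (Fin k → ℝ)) (Bbar : ℝ)
    (hbias : ∀ γ ∈ Γ, |a ⬝ᵥ (Z *ᵥ γ)| ≤ Bbar)
    (σ : ℝ) (hσ : 0 < σ) (α : ℝ) (hα0 : 0 < α) (hα1 : α < 1)
    {Ω : Type*} [MeasureSpace Ω] (P : Measure Ω) [IsProbabilityMeasure P]
    (ε : Ω → Fin n → ℝ) (hmeas : ∀ i, Measurable fun ω => ε ω i)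
    (hindep : iIndepFun (fun i ω => ε ω i) P)
    (hgauss : ∀ i, P.map (fun ω => ε ω i) = gaussianReal 0 (σ ^ 2).toNNReal)
    (β : ℝ) (γ : Fin k → ℝ) (hγ : γ ∈ Γ)
    (Y : Ω → Fin n → ℝ) (hY : ∀ ω, Y ω = β • w + Z *ᵥ γ + ε ω)
    (V : ℝ) (hV : V = σ ^ 2 * (a ⬝ᵥ a)) :
    1 - α ≤ (P {ω | |a ⬝ᵥ Y ω - β| ≤ cv α (Bbar / Real.sqrt V) * Real.sqrt V}).toReal := by
  have hV0 : 0 < V :=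
    hV ▸ mul_pos (pow_pos hσ 2) (by simpa using dotProduct_star_self_pos_iff.2 ha)
  have hlaw := map_dotProduct_sub_eq_gaussianReal haw Z β σ γ hmeas hindep hgauss hY
  rw [← hV] at hlaw
  rw [toReal_measure_abs_le_mul_sqrt_eq_gaussianCoverage hV0 hlaw]
  have hbias_std : |a ⬝ᵥ (Z *ᵥ γ) / √V| ≤ |Bbar / √V| := by
    rw [abs_div, abs_of_pos (sqrt_pos.2 hV0)]
    exact (div_le_div_of_nonneg_right (hbias γ hγ) (sqrt_nonneg V)).trans (le_abs_self _)
  exact (le_gaussianCoverage_cv hα0 hα1 _).trans (gaussianCoverage_le_of_abs_le hbias_std _)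

/-- Coverage of the bias-aware fixed-length CI in the Gaussian model: if `β̂ = a'Y` with
`Y = wβ + Zγ + ε`, `ε ~ N(0, σ²Iₙ)`, `a'w = 1` and `|a'Zγ| ≤ B̄` on `Γ`, then for every
`β ∈ ℝ` and `γ ∈ Γ`, `P(|β̂ − β| ≤ cv_α(B̄/√V)·√V) ≥ 1 − α` where `V = σ²a'a`. -/
theorem bias_aware_flci_coverage {n k : ℕ}
    (w : Fin n → ℝ) (Z : Matrix (Fin n) (Fin k) ℝ) (a : Fin n → ℝ) (ha : a ≠ 0)
    (haw : a ⬝ᵥ w = 1)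
    (Γ : Set (Fin k → ℝ)) (Bbar : ℝ) (hB : 0 ≤ Bbar)
    (hbias : ∀ γ ∈ Γ, |a ⬝ᵥ (Z *ᵥ γ)| ≤ Bbar)
    (σ : ℝ) (hσ : 0 < σ) (α : ℝ) (hα0 : 0 < α) (hα1 : α < 1)
    {Ω : Type*} [MeasureSpace Ω] (P : Measure Ω) [IsProbabilityMeasure P]
    (ε : Ω → Fin n → ℝ) (hmeas : ∀ i, Measurable fun ω => ε ω i)
    (hindep : iIndepFun (fun i ω => ε ω i) P)
    (hgauss : ∀ i, P.map (fun ω => ε ω i) = gaussianReal 0 (σ ^ 2).toNNReal)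
    (β : ℝ) (γ : Fin k → ℝ) (hγ : γ ∈ Γ)
    (Y : Ω → Fin n → ℝ) (hY : ∀ ω, Y ω = β • w + Z *ᵥ γ + ε ω)
    (V : ℝ) (hV : V = σ ^ 2 * (a ⬝ᵥ a)) :
    1 - α ≤ (P {ω | |a ⬝ᵥ Y ω - β| ≤ cv α (Bbar / Real.sqrt V) * Real.sqrt V}).toReal :=
  bias_aware_flci_coverage_general w Z a ha haw Γ Bbar hbias σ hσ α hα0 hα1 P ε hmeas hindep hgauss
    β γ hγ Y hY V hV
end
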